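/- Let N be a finitely generated torsion-free nilpotent group whose rational Malcev completion has no abelian direct factor. Then the center Z(N) is contained in the isolator of the commutator subgroup, √[N](γ₂(N)) = {g ∈ N | ∃ n ≥ 1, g^n ∈ [N,N]}. -/

import Mathlib

/-!
Suppose a central `z ∈ N` had no positive power in `[N,N]`. Every element of `[M,M]` has a
positive power in `ι [N,N]` (an induction along the lower central series, using that `ι N` is
cofinal in the nilpotent group `M`), so `ζ = ι z` has infinite order in the abelianization of
`M`; as `ℚ` is an injective `ℤ`-module, some homomorphism `ψ : M → ℚ` has `ψ ζ ≠ 0`. Unique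
roots make `ζ` central in `M`, and the rational powers of `ζ` then form a nontrivial central
subgroup `A` with `M = A × ker ψ`, an abelian direct factor.
-/

universe u v

/-- A monoid is torsion-free if no nontrivial element has finite order. -/
def Monoid.IsTorsionFree (G : Type*) [Monoid G] : Prop :=
  ∀ g : G, g ≠ 1 → ¬IsOfFinOrder g

/-- `ι : N →* M` realizes `M` as the rational Malcev completion of `N`: `M` is a
torsion-free nilpotent group into which `N` embeds, every element of `M` has a unique
`k`-th root for every `k ≥ 1`, and every element of `M` has some positive power lying in
(the image of) `N`. -/
structure IsRationalMalcevCompletion {N M : Type*} [Group N] [Group M] (ι : N →* M) :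
    Prop where
  nilpotent : Group.IsNilpotent M
  torsionFree : Monoid.IsTorsionFree M
  injective : Function.Injective ι
  uniqueRoots : ∀ (m : M) (k : ℕ), 0 < k → ∃! x : M, x ^ k = m
  cofinal : ∀ m : M, ∃ k : ℕ, 0 < k ∧ m ^ k ∈ MonoidHom.range ι

/-- A group has no abelian direct factor if whenever it is isomorphic to `A × B` with `A`
abelian, `A` is trivial. -/
def NoAbelianDirectFactor (G : Type u) [Group G] : Prop :=
  ∀ (A B : Type u) (_ : Group A) (_ : Group B),
    Nonempty (G ≃* A × B) → (∀ a b : A, a * b = b * a) → Subsingleton A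

open Subgroup
open scoped commutatorElement

section Isolator

variable {G : Type*} [Group G]

def isolator (S : Subgroup G) : Set G := {g | ∃ n, 0 < n ∧ g ^ n ∈ S}

def centralIsolator (S : Subgroup G) : Subgroup G where
  carrier := (center G : Set G) ∩ isolator S
  one_mem' := ⟨one_mem _, 1, one_pos, by simp⟩
  mul_mem' := by
    rintro a b ⟨ha, k, hk, hak⟩ ⟨hb, l, hl, hbl⟩
    refine ⟨mul_mem ha hb, k * l, Nat.mul_pos hk hl, ?_⟩
    rw [Commute.mul_pow (mem_center_iff.mp hb a), pow_mul, mul_comm k l, pow_mul]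
    exact mul_mem (pow_mem hak l) (pow_mem hbl k)
  inv_mem' := by
    rintro a ⟨ha, k, hk, hak⟩
    exact ⟨inv_mem ha, k, hk, by simpa using inv_mem hak⟩

theorem Commute.of_pow_left [IsMulTorsionFree G] {a b : G} {n : ℕ} (hn : n ≠ 0)
    (h : Commute (a ^ n) b) : Commute a b := by
  have : (b * a * b⁻¹) ^ n = a ^ n := by rw [conj_pow, ← h.eq, mul_inv_cancel_right]
  exact (mul_inv_eq_iff_eq_mul.mp (pow_left_injective hn this)).symm

theorem mem_center_of_pow_mem_center [IsMulTorsionFree G] {a : G} {n : ℕ} (hn : n ≠ 0)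
    (h : a ^ n ∈ center G) : a ∈ center G :=
  mem_center_iff.mpr fun g => (Commute.of_pow_left hn (mem_center_iff.mp h g).symm).symm

end Isolator

section Commutator

variable {G : Type*} [Group G] {a b c : G}

theorem commutatorElement_mul_left_of_mem_center (hc : c ∈ center G) : ⁅a * c, b⁆ = ⁅a, b⁆ := by
  rw [commutatorElement_mul_left_eq_conj_mul,
    commutatorElement_eq_one_iff_mul_comm.mpr (mem_center_iff.mp hc b).symm]
  group

theorem commutatorElement_pow_left_of_mem_center (h : ⁅a, b⁆ ∈ center G) (p : ℕ) :
    ⁅a ^ p, b⁆ = ⁅a, b⁆ ^ p := by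
  induction p with
  | zero => simp
  | succ p ih =>
    rw [pow_succ', commutatorElement_mul_left_eq_conj_mul, ih,
      mem_center_iff.mp (pow_mem h p) a, mul_inv_cancel_right, pow_succ]

theorem commutatorElement_pow_right_of_mem_center (h : ⁅a, b⁆ ∈ center G) (q : ℕ) :
    ⁅a, b ^ q⁆ = ⁅a, b⁆ ^ q := by
  rw [← commutatorElement_inv, commutatorElement_pow_left_of_mem_center (by
    rw [← commutatorElement_inv]; exact inv_mem h), ← commutatorElement_inv, inv_pow, inv_inv]

theorem commutatorElement_pow_pow_of_mem_center (h : ⁅a, b⁆ ∈ center G) (p q : ℕ) :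
    ⁅a ^ p, b ^ q⁆ = ⁅a, b⁆ ^ (p * q) := by
  have hp := commutatorElement_pow_left_of_mem_center h p
  rw [commutatorElement_pow_right_of_mem_center (hp ▸ pow_mem h p), hp, pow_mul]

end Commutator

section LowerCentralSeries

variable {M : Type*} [Group M] {H : Subgroup M}

theorem mk_mem_center_of_mem_lowerCentralSeries {n : ℕ} {x : M}
    (hx : x ∈ (⊤ : Subgroup M).lowerCentralSeries n) :
    QuotientGroup.mk' ((⊤ : Subgroup M).lowerCentralSeries (n + 1)) x ∈ center _ := by
  refine mem_center_iff.mpr fun g => ?_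
  induction g using QuotientGroup.induction_on with
  | H g =>
    rw [QuotientGroup.mk'_apply, ← QuotientGroup.mk_mul, ← QuotientGroup.mk_mul, QuotientGroup.eq]
    have : (g * x)⁻¹ * (x * g) = ⁅x⁻¹, g⁻¹⁆ := by simp [commutatorElement_def, mul_assoc]
    rw [this]
    exact commutator_mem_commutator (inv_mem hx) (mem_top _)

theorem exists_pow_eq_mul_of_mem_lowerCentralSeries (hH : ∀ m : M, m ∈ isolator H) (i : ℕ)
    {x : M} (hx : x ∈ (⊤ : Subgroup M).lowerCentralSeries i) :
    ∃ k, 0 < k ∧ ∃ y ∈ H.lowerCentralSeries i,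
      ∃ e ∈ (⊤ : Subgroup M).lowerCentralSeries (i + 1), x ^ k = y * e := by
  induction i generalizing x with
  | zero =>
    obtain ⟨k, hk, hxk⟩ := hH x
    exact ⟨k, hk, x ^ k, hxk, 1, one_mem _, (mul_one _).symm⟩
  | succ i ih =>
    let π := QuotientGroup.mk' ((⊤ : Subgroup M).lowerCentralSeries (i + 2))
    suffices hle : (⊤ : Subgroup M).lowerCentralSeries (i + 1) ≤
        (centralIsolator ((H.lowerCentralSeries (i + 1)).map π)).comap π by
      obtain ⟨-, k, hk, y, hy, hyx⟩ := hle hx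
      rw [← map_pow] at hyx
      obtain ⟨e, he, hye⟩ := (QuotientGroup.mk'_eq_mk' _).mp hyx
      exact ⟨k, hk, y, hy, e, he, hye.symm⟩
    rw [Subgroup.lowerCentralSeries_succ, commutator_le]
    intro a ha b _
    obtain ⟨p, hp, y, hy, e, he, hay⟩ := ih ha
    obtain ⟨q, hq, hbq⟩ := hH b
    have hab : ⁅π a, π b⁆ ∈ center _ := by
      rw [← map_commutatorElement]
      exact mk_mem_center_of_mem_lowerCentralSeries (commutator_mem_commutator ha (mem_top b))
    refine ⟨map_commutatorElement π a b ▸ hab, p * q, Nat.mul_pos hp hq,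
      ⁅y, b ^ q⁆, commutator_mem_commutator hy hbq, ?_⟩
    -- Writing `γ` for the lower central series of `M`, indexed from `γ 0 = M`: in `M ⧸ γ (i + 2)`
    -- the commutator is bilinear on `γ i × M`, and `π e` is central.
    calc π ⁅y, b ^ q⁆ = ⁅π y * π e, π (b ^ q)⁆ := by
          rw [commutatorElement_mul_left_of_mem_center
            (mk_mem_center_of_mem_lowerCentralSeries he), map_commutatorElement]
      _ = ⁅π a ^ p, π b ^ q⁆ := by rw [← map_mul, ← hay, map_pow, map_pow]
      _ = π ⁅a, b⁆ ^ (p * q) := by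
          rw [commutatorElement_pow_pow_of_mem_center hab, map_commutatorElement]

theorem exists_pow_eq_mul_of_mem_lowerCentralSeries_add (hH : ∀ m : M, m ∈ isolator H)
    (i t : ℕ) {x : M} (hx : x ∈ (⊤ : Subgroup M).lowerCentralSeries i) :
    ∃ k, 0 < k ∧ ∃ y ∈ H.lowerCentralSeries i,
      ∃ e ∈ (⊤ : Subgroup M).lowerCentralSeries (i + t), x ^ k = y * e := by
  induction t with
  | zero => exact ⟨1, one_pos, 1, one_mem _, x, hx, by simp⟩
  | succ t ih =>
    obtain ⟨k, hk, y, hy, e, he, hxk⟩ := ih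
    obtain ⟨l, hl, w, hw, f, hf, hel⟩ := exists_pow_eq_mul_of_mem_lowerCentralSeries hH (i + t) he
    let π := QuotientGroup.mk' ((⊤ : Subgroup M).lowerCentralSeries (i + t + 1))
    have hye : Commute (π y) (π e) :=
      mem_center_iff.mp (mk_mem_center_of_mem_lowerCentralSeries he) (π y)
    have hπf : π f = 1 := (QuotientGroup.eq_one_iff f).mpr hf
    have hπ : π (y ^ l * w) = π (x ^ (k * l)) :=
      calc π (y ^ l * w) = π y ^ l * π e ^ l := by
            rw [← map_pow π e, hel, map_mul, map_mul, hπf, mul_one, map_pow]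
        _ = π (x ^ (k * l)) := by rw [← hye.mul_pow, ← map_mul, ← hxk, ← map_pow, ← pow_mul]
    obtain ⟨f', hf', hxkl⟩ := (QuotientGroup.mk'_eq_mk' _).mp hπ
    exact ⟨k * l, Nat.mul_pos hk hl, y ^ l * w,
      mul_mem (pow_mem hy l) (Subgroup.lowerCentralSeries_antitone H (Nat.le_add_right i t) hw),
      f', hf', hxkl.symm⟩

theorem lowerCentralSeries_subset_isolator [Group.IsNilpotent M] (hH : ∀ m : M, m ∈ isolator H)
    (i : ℕ) :
    ((⊤ : Subgroup M).lowerCentralSeries i : Set M) ⊆ isolator (H.lowerCentralSeries i) := by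
  obtain ⟨c, hc⟩ := Subgroup.nilpotent_iff_lowerCentralSeries.mp ‹Group.IsNilpotent M›
  intro x hx
  obtain ⟨k, hk, y, hy, e, he, hxk⟩ := exists_pow_eq_mul_of_mem_lowerCentralSeries_add hH i c hx
  have he1 : e = 1 := by
    simpa [hc] using Subgroup.lowerCentralSeries_antitone ⊤ (Nat.le_add_left c i) he
  exact ⟨k, hk, by rwa [hxk, he1, mul_one]⟩

end LowerCentralSeries

theorem commutator_subset_isolator_map {N M : Type*} [Group N] [Group M] [Group.IsNilpotent M]
    {ι : N →* M} (hι : ∀ m : M, m ∈ isolator ι.range) :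
    (commutator M : Set M) ⊆ isolator ((commutator N).map ι) := by
  rw [← top_lowerCentralSeries_one, ← top_lowerCentralSeries_one, map_lowerCentralSeries,
    ← MonoidHom.range_eq_map]
  exact lowerCentralSeries_subset_isolator hι 1

theorem exists_monoidHom_rat_ne_one {G : Type*} [Group G] {g : G}
    (hg : g ∉ isolator (commutator G)) : ∃ ψ : G →* Multiplicative ℚ, ψ g ≠ 1 := by
  set a := Additive.ofMul (Abelianization.of g)
  have ha : ¬IsOfFinAddOrder a := by
    rw [isOfFinAddOrder_ofMul_iff, isOfFinOrder_iff_pow_eq_one]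
    rintro ⟨n, hn, hgn⟩
    refine hg ⟨n, hn, ?_⟩
    rwa [← map_pow, ← MonoidHom.mem_ker, Abelianization.ker_of] at hgn
  obtain ⟨h, hh⟩ := (Module.Baer.of_divisible ℚ).extension_property_addMonoidHom
    (zmultiplesHom _ a) (injective_zsmul_iff_not_isOfFinAddOrder.mpr ha) (Int.castAddHom ℚ)
  refine ⟨(AddMonoidHom.toMultiplicativeRight h).comp Abelianization.of, ?_⟩
  have : h a = 1 := by simpa using DFunLike.congr_fun hh 1
  simp [AddMonoidHom.coe_toMultiplicativeRight, a, this]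

section Splitting

variable {M : Type*} [Group M] [IsMulTorsionFree M] {ζ : M} {ψ : M →* Multiplicative ℚ}

theorem disjoint_centralIsolator_zpowers_ker (hψ : ψ ζ ≠ 1) :
    Disjoint (centralIsolator (zpowers ζ)) ψ.ker := by
  rw [disjoint_def]
  rintro x ⟨-, k, hk, j, hj : ζ ^ j = x ^ k⟩ hx
  have hj0 : j = 0 := by
    have : ψ ζ ^ j = 1 := by rw [← map_zpow, hj, map_pow, MonoidHom.mem_ker.mp hx, one_pow]
    exact ((injective_zpow_iff_not_isOfFinOrder.mpr
      (not_isOfFinOrder_of_isMulTorsionFree hψ)).eq_iff' (zpow_zero _)).mp this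
  rwa [hj0, zpow_zero, eq_comm, pow_eq_one_iff_left hk.ne'] at hj

theorem exists_mem_centralIsolator_zpowers_map_eq
    (hroot : ∀ (m : M) (k : ℕ), 0 < k → ∃ x, x ^ k = m) (hζ : ζ ∈ center M) (hψ : ψ ζ ≠ 1)
    (m : M) : ∃ a ∈ centralIsolator (zpowers ζ), ψ a = ψ m := by
  set r : ℚ := (ψ m).toAdd / (ψ ζ).toAdd
  obtain ⟨a, ha⟩ := hroot (ζ ^ r.num) r.den r.pos
  refine ⟨a, ⟨mem_center_of_pow_mem_center r.den_ne_zero (ha ▸ zpow_mem hζ _),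
    r.den, r.pos, ha ▸ zpow_mem (mem_zpowers ζ) _⟩, ?_⟩
  have hψζ : (ψ ζ).toAdd ≠ 0 := by simpa using hψ
  have hden : (r.den : ℚ) * (ψ a).toAdd = r.num * (ψ ζ).toAdd := by
    simpa using congrArg (fun x => (ψ x).toAdd) ha
  apply Multiplicative.toAdd.injective
  rw [← mul_right_inj' (Nat.cast_ne_zero.mpr r.den_ne_zero), hden, ← Rat.mul_den_eq_num,
    mul_right_comm, div_mul_cancel₀ _ hψζ, mul_comm]

theorem not_noAbelianDirectFactor (hroot : ∀ (m : M) (k : ℕ), 0 < k → ∃ x, x ^ k = m)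
    (hζ : ζ ∈ center M) (hψ : ψ ζ ≠ 1) : ¬NoAbelianDirectFactor M := by
  intro hno
  set A := centralIsolator (zpowers ζ)
  have hcomm : ∀ (a : A) (b : ψ.ker), Commute (A.subtype a) (ψ.ker.subtype b) :=
    fun a b => (mem_center_iff.mp a.2.1 b).symm
  let F := A.subtype.noncommCoprod ψ.ker.subtype hcomm
  have hF : Function.Bijective F := by
    refine ⟨(MonoidHom.noncommCoprod_injective _ _ hcomm).mpr ⟨A.subtype_injective,
      ψ.ker.subtype_injective, by simpa using disjoint_centralIsolator_zpowers_ker hψ⟩, ?_⟩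
    intro m
    obtain ⟨a, haA, ha⟩ := exists_mem_centralIsolator_zpowers_map_eq hroot hζ hψ m
    exact ⟨(⟨a, haA⟩, ⟨a⁻¹ * m, by simp [MonoidHom.mem_ker, ha]⟩), by simp [F]⟩
  have : Subsingleton A := hno A ψ.ker _ _ ⟨(MulEquiv.ofBijective F hF).symm⟩
    fun a b => Subtype.ext (mem_center_iff.mp b.2.1 a)
  have hζ1 : ζ = 1 :=
    congrArg Subtype.val (Subsingleton.elim (⟨ζ, hζ, 1, one_pos, by simp⟩ : A) 1)
  exact hψ (by rw [hζ1, map_one])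

end Splitting

namespace IsRationalMalcevCompletion

variable {N M : Type*} [Group N] [Group M] {ι : N →* M}

theorem isMulTorsionFree (hι : IsRationalMalcevCompletion ι) : IsMulTorsionFree M :=
  ⟨fun n hn _ _ hab => (hι.uniqueRoots _ n (Nat.pos_of_ne_zero hn)).unique hab rfl⟩

theorem map_mem_center (hι : IsRationalMalcevCompletion ι) {z : N} (hz : z ∈ center N) :
    ι z ∈ center M := by
  have := hι.isMulTorsionFree
  refine mem_center_iff.mpr fun m => ?_
  obtain ⟨k, hk, n, hn⟩ := hι.cofinal m
  exact Commute.of_pow_left hk.ne' (hn ▸ Commute.map (mem_center_iff.mp hz n) ι)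

theorem map_notMem_isolator_commutator (hι : IsRationalMalcevCompletion ι) {z : N}
    (hz : z ∉ isolator (commutator N)) : ι z ∉ isolator (commutator M) := by
  have := hι.nilpotent
  rintro ⟨k, hk, hzk⟩
  obtain ⟨l, hl, y, hy, hyz⟩ := commutator_subset_isolator_map hι.cofinal hzk
  rw [← pow_mul, ← map_pow] at hyz
  exact hz ⟨k * l, Nat.mul_pos hk hl, hι.injective hyz ▸ hy⟩

end IsRationalMalcevCompletion

theorem center_le_isolator_commutator_general (N : Type u) (M : Type v) [Group N] [Group M]
    (ι : N →* M) (hι : IsRationalMalcevCompletion ι)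
    (hno : NoAbelianDirectFactor M) :
    (Subgroup.center N : Set N) ⊆ {g : N | ∃ n : ℕ, 0 < n ∧ g ^ n ∈ commutator N} := by
  intro z hz
  by_contra hzi
  have := hι.isMulTorsionFree
  obtain ⟨ψ, hψ⟩ := exists_monoidHom_rat_ne_one (hι.map_notMem_isolator_commutator hzi)
  exact not_noAbelianDirectFactor (fun m k hk => (hι.uniqueRoots m k hk).exists)
    (hι.map_mem_center hz) hψ hno

/-- If the rational Malcev completion of a finitely generated torsion-free nilpotent group
`N` has no abelian direct factor, then `Z(N)` is contained in the isolator of the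
commutator subgroup `√[N](γ₂(N)) = {g ∈ N | ∃ n ≥ 1, g^n ∈ [N,N]}`. -/
theorem center_le_isolator_commutator (N : Type u) (M : Type v) [Group N] [Group M]
    (hfg : Group.FG N) (htf : Monoid.IsTorsionFree N) [Group.IsNilpotent N]
    (ι : N →* M) (hι : IsRationalMalcevCompletion ι)
    (hno : NoAbelianDirectFactor M) :
    (Subgroup.center N : Set N) ⊆ {g : N | ∃ n : ℕ, 0 < n ∧ g ^ n ∈ commutator N} :=
  center_le_isolator_commutator_general N M ι hι hno
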